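/- Let X_⋆ be a symmetric PSD rank-r matrix with column space spanned by orthonormal V_⋆ ∈ R^{d×r} and orthogonal complement spanned by V_⊥. Let U, W ∈ R^{d×r}. Assume ‖UU^T − X_⋆‖ ≤ σ_min(X_⋆)/1600 and ‖UU^T − WW^T‖_F ≤ (√(3(√2−1))/40) σ_min(X_⋆). Then ‖V_⊥^T (UU^T − WW^T) V_⊥‖_F ≤ (3/5) ‖V_⋆^T (UU^T − WW^T)‖_F, and consequently ‖UU^T − WW^T‖_F ≤ 3 ‖V_⋆^T (UU^T − WW^T)‖_F. -/

import Mathlib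

open scoped BigOperators
open Matrix

noncomputable def frobNorm {d₁ d₂ : ℕ} (A : Matrix (Fin d₁) (Fin d₂) ℝ) : ℝ :=
  Real.sqrt (∑ i, ∑ j, A i j ^ 2)

noncomputable def vecNorm {m : ℕ} (y : Fin m → ℝ) : ℝ :=
  Real.sqrt (∑ i, y i ^ 2)

noncomputable def specNorm {d₁ d₂ : ℕ} (A : Matrix (Fin d₁) (Fin d₂) ℝ) : ℝ :=
  ‖LinearMap.toContinuousLinearMap (Matrix.toEuclideanLin A)‖

noncomputable def tinner {d : ℕ} (A B : Matrix (Fin d) (Fin d) ℝ) : ℝ :=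
  (A * Bᵀ).trace

noncomputable def sigmaMin {d₁ d₂ : ℕ} (A : Matrix (Fin d₁) (Fin d₂) ℝ) : ℝ :=
  sInf {s : ℝ | 0 < s ∧ ∃ i, s ^ 2 = (show (Aᵀ * A).IsHermitian by
    simpa [Matrix.conjTranspose_eq_transpose_of_trivial] using Matrix.isHermitian_conjTranspose_mul_self A).eigenvalues i}

noncomputable def projPerp {d : ℕ} (w : Fin d → ℝ) (Z : Matrix (Fin d) (Fin d) ℝ) :
    Matrix (Fin d) (Fin d) ℝ :=
  Z - tinner (Matrix.vecMulVec w w) Z • Matrix.vecMulVec w w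

/-!
Write `Δ = UUᵀ - WWᵀ` and split `U`, `W` along `V⋆`, `V⊥`: `P = UᵀV⋆`, `Q = UᵀV⊥`, `T = WᵀV⋆`,
`R = WᵀV⊥`. On the column space of `X⋆` one has `yᵀX⋆y ≥ σ‖y‖²` with `σ = σ_min(X⋆)`, because
`X⋆³ - σX⋆² ⪰ 0` by the functional calculus. As `UUᵀ` is `σ/1600`-close to `X⋆` in operator norm,
`P` is well conditioned and `Q` is small, and the bound on `‖Δ‖_F` carries this over to `T` and
`R`. Eliminating `Q` through `K = P⁻¹Q` gives
  `V⊥ᵀΔV⊥ = QᵀQ - RᵀR = Kᵀ M + (KᵀTᵀ - Rᵀ) R`  and  `(KᵀTᵀ - Rᵀ) T = Mᵀ - Kᵀ S`,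
where `M = V⋆ᵀΔV⊥` and `S = V⋆ᵀΔV⋆` are blocks of `V⋆ᵀΔ`; with `‖K‖ ≤ 1/39` and
`‖R‖‖T⁻¹‖ ≤ 9/50` this yields `‖V⊥ᵀΔV⊥‖_F ≤ (1/39 + 9/50 · 40/39) ‖V⋆ᵀΔ‖_F`. The second
inequality is Pythagoras for `1 = V⋆V⋆ᵀ + V⊥V⊥ᵀ`, using that `Δ` is symmetric.
-/

section Spectrum

open scoped MatrixOrder

variable {d r : ℕ}

lemma sigmaMin_nonneg {d₁ d₂ : ℕ} (A : Matrix (Fin d₁) (Fin d₂) ℝ) : 0 ≤ sigmaMin A :=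
  Real.sInf_nonneg fun _ hs => hs.1.le

lemma sigmaMin_le_of_mem_spectrum {X : Matrix (Fin d) (Fin d) ℝ} (hX : X.IsHermitian) {t : ℝ}
    (ht : t ∈ spectrum ℝ X) (ht0 : 0 < t) : sigmaMin X ≤ t := by
  refine csInf_le ⟨0, fun _ hs => hs.1.le⟩ ⟨ht0, ?_⟩
  have hXX : Xᵀ * X = X ^ 2 := by rw [sq, (isHermitian_iff_isSymm.mp hX).eq]
  have hsq : t ^ 2 ∈ spectrum ℝ (Xᵀ * X) := by
    rw [hXX, ← cfc_pow_id (R := ℝ) X 2 hX.isSelfAdjoint,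
      cfc_map_spectrum (R := ℝ) _ X hX.isSelfAdjoint]
    exact ⟨t, ht, rfl⟩
  have hH : (Xᵀ * X).IsHermitian := hXX ▸ hX.pow 2
  obtain ⟨i, hi⟩ := hH.spectrum_real_eq_range_eigenvalues ▸ hsq
  exact ⟨i, hi.symm⟩

lemma posSemidef_pow_three_sub_smul_sq {X : Matrix (Fin d) (Fin d) ℝ} (hX : X.PosSemidef)
    {σ : ℝ} (hσ : ∀ t ∈ spectrum ℝ X, 0 < t → σ ≤ t) : (X ^ 3 - σ • X ^ 2).PosSemidef := by
  have hsa : IsSelfAdjoint X := hX.isHermitian.isSelfAdjoint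
  have hcfc : X ^ 3 - σ • X ^ 2 = cfc (fun t : ℝ => t ^ 3 - σ * t ^ 2) X := by
    rw [cfc_sub .., cfc_const_mul .., cfc_pow_id .., cfc_pow_id ..]
  rw [hcfc, ← Matrix.nonneg_iff_posSemidef]
  refine cfc_nonneg fun t ht => ?_
  rcases (spectrum_nonneg_of_nonneg hX.nonneg ht).eq_or_lt with rfl | ht0
  · simp
  · nlinarith [hσ t ht ht0, sq_nonneg t]

lemma sigmaMin_mul_dotProduct_le {X : Matrix (Fin d) (Fin d) ℝ} (hX : X.PosSemidef)
    (z : Fin d → ℝ) :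
    sigmaMin X * ((X *ᵥ z) ⬝ᵥ (X *ᵥ z)) ≤ (X *ᵥ z) ⬝ᵥ (X *ᵥ (X *ᵥ z)) := by
  have hP := (posSemidef_pow_three_sub_smul_sq hX fun t ht ht0 =>
    sigmaMin_le_of_mem_spectrum hX.isHermitian ht ht0).dotProduct_mulVec_nonneg z
  have hsymm (v w : Fin d → ℝ) : (X *ᵥ v) ⬝ᵥ w = v ⬝ᵥ (X *ᵥ w) := by
    rw [Matrix.dotProduct_mulVec, ← Matrix.mulVec_transpose,
      (isHermitian_iff_isSymm.mp hX.isHermitian).eq]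
  rw [star_trivial, Matrix.sub_mulVec, dotProduct_sub, Matrix.smul_mulVec, dotProduct_smul,
    smul_eq_mul, sub_nonneg, pow_three, sq, ← Matrix.mulVec_mulVec, ← Matrix.mulVec_mulVec,
    ← Matrix.mulVec_mulVec] at hP
  rwa [hsymm z, hsymm z]

lemma exists_mulVec_eq_of_rank {X : Matrix (Fin d) (Fin d) ℝ} (hXrank : X.rank = r)
    {V : Matrix (Fin d) (Fin r) ℝ} (hVX : V * Vᵀ * X = X) (x : Fin r → ℝ) :
    ∃ z, X *ᵥ z = V *ᵥ x := by
  have hle : LinearMap.range X.mulVecLin ≤ LinearMap.range V.mulVecLin := by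
    rintro _ ⟨z, rfl⟩
    exact ⟨(Vᵀ * X) *ᵥ z, by simp [Matrix.mulVec_mulVec, ← Matrix.mul_assoc, hVX]⟩
  have hrank : Module.finrank ℝ (LinearMap.range V.mulVecLin) ≤
      Module.finrank ℝ (LinearMap.range X.mulVecLin) := by
    have := V.rank_le_width
    rw [Matrix.rank] at this hXrank
    omega
  obtain ⟨z, hz⟩ := (Submodule.eq_of_le_of_finrank_le hle hrank).ge ⟨x, rfl⟩
  exact ⟨z, hz⟩

end Spectrum

section OperatorNorm

open scoped Matrix.Norms.L2Operator

variable {d k m n p r : ℕ}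

lemma dotProduct_self_eq_norm_sq (x : Fin n → ℝ) :
    x ⬝ᵥ x = ‖(WithLp.toLp 2 x : EuclideanSpace ℝ (Fin n))‖ ^ 2 := by
  rw [EuclideanSpace.real_norm_sq_eq]
  simp [dotProduct, sq]

lemma mulVec_dotProduct_self_le (M : Matrix (Fin m) (Fin n) ℝ) (x : Fin n → ℝ) :
    (M *ᵥ x) ⬝ᵥ (M *ᵥ x) ≤ ‖M‖ ^ 2 * (x ⬝ᵥ x) := by
  rw [dotProduct_self_eq_norm_sq, dotProduct_self_eq_norm_sq, ← mul_pow]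
  exact pow_le_pow_left₀ (norm_nonneg _) (M.l2_opNorm_mulVec (WithLp.toLp 2 x)) 2

lemma l2_opNorm_sq_le {M : Matrix (Fin m) (Fin n) ℝ} {c : ℝ} (hc : 0 ≤ c)
    (h : ∀ x, (M *ᵥ x) ⬝ᵥ (M *ᵥ x) ≤ c * (x ⬝ᵥ x)) : ‖M‖ ^ 2 ≤ c := by
  rw [← Real.sq_sqrt hc]
  refine pow_le_pow_left₀ (norm_nonneg _) ?_ 2
  rw [Matrix.l2_opNorm_def]
  refine ContinuousLinearMap.opNorm_le_bound _ (Real.sqrt_nonneg c) fun x => ?_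
  rw [← sq_le_sq₀ (norm_nonneg _) (by positivity), mul_pow, Real.sq_sqrt hc]
  simpa [dotProduct_self_eq_norm_sq, Matrix.toLpLin_apply] using h x.ofLp

lemma abs_dotProduct_mulVec_le (M : Matrix (Fin n) (Fin n) ℝ) (x : Fin n → ℝ) :
    |x ⬝ᵥ (M *ᵥ x)| ≤ ‖M‖ * (x ⬝ᵥ x) := by
  have h := abs_real_inner_le_norm (WithLp.toLp 2 x : EuclideanSpace ℝ (Fin n))
    (WithLp.toLp 2 (M *ᵥ x))
  rw [EuclideanSpace.inner_toLp_toLp, star_trivial, dotProduct_comm] at h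
  refine h.trans ?_
  rw [dotProduct_self_eq_norm_sq, sq, mul_comm ‖M‖, mul_assoc]
  refine mul_le_mul_of_nonneg_left ?_ (norm_nonneg _)
  simpa [mul_comm] using M.l2_opNorm_mulVec (WithLp.toLp 2 x)

lemma abs_dotProduct_mulVec_sub_le (A B : Matrix (Fin n) (Fin n) ℝ) (y : Fin n → ℝ) :
    |y ⬝ᵥ (A *ᵥ y) - y ⬝ᵥ (B *ᵥ y)| ≤ ‖A - B‖ * (y ⬝ᵥ y) := by
  rw [← dotProduct_sub, ← Matrix.sub_mulVec]
  exact abs_dotProduct_mulVec_le _ _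

lemma isUnit_det_and_l2_opNorm_inv_sq_le {M : Matrix (Fin n) (Fin n) ℝ} {c : ℝ} (hc : 0 < c)
    (h : ∀ x, c * (x ⬝ᵥ x) ≤ (M *ᵥ x) ⬝ᵥ (M *ᵥ x)) : IsUnit M.det ∧ ‖M⁻¹‖ ^ 2 ≤ c⁻¹ := by
  have hM : IsUnit M := by
    refine Matrix.mulVec_injective_iff_isUnit.mp fun x y hxy => ?_
    have hz := h (x - y)
    rw [Matrix.mulVec_sub, hxy, sub_self, dotProduct_zero] at hz
    have : (x - y) ⬝ᵥ (x - y) = 0 :=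
      le_antisymm (nonpos_of_mul_nonpos_right hz hc) (dotProduct_self_star_nonneg _)
    exact sub_eq_zero.mp (dotProduct_self_eq_zero.mp this)
  have hdet := (Matrix.isUnit_iff_isUnit_det M).mp hM
  refine ⟨hdet, l2_opNorm_sq_le (inv_nonneg.mpr hc.le) fun z => ?_⟩
  have := h (M⁻¹ *ᵥ z)
  rw [Matrix.mulVec_mulVec, Matrix.mul_nonsing_inv _ hdet, Matrix.one_mulVec] at this
  rwa [inv_mul_eq_div, le_div_iff₀ hc, mul_comm]

lemma dotProduct_mul_transpose_mulVec (V : Matrix (Fin m) (Fin k) ℝ) (y : Fin m → ℝ) :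
    y ⬝ᵥ ((V * Vᵀ) *ᵥ y) = (Vᵀ *ᵥ y) ⬝ᵥ (Vᵀ *ᵥ y) := by
  rw [← Matrix.mulVec_mulVec, Matrix.dotProduct_mulVec, Matrix.mulVec_transpose]

lemma transpose_mul_mulVec_dotProduct_self (U : Matrix (Fin d) (Fin r) ℝ)
    (V : Matrix (Fin d) (Fin k) ℝ) (x : Fin k → ℝ) :
    ((Uᵀ * V) *ᵥ x) ⬝ᵥ ((Uᵀ * V) *ᵥ x) = (V *ᵥ x) ⬝ᵥ ((U * Uᵀ) *ᵥ (V *ᵥ x)) := by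
  rw [dotProduct_mul_transpose_mulVec, Matrix.mulVec_mulVec]

lemma l2_opNorm_transpose_mul_sq_le {U : Matrix (Fin d) (Fin r) ℝ} {V : Matrix (Fin d) (Fin k) ℝ}
    {c : ℝ} (hc : 0 ≤ c) (h : ∀ x, (V *ᵥ x) ⬝ᵥ ((U * Uᵀ) *ᵥ (V *ᵥ x)) ≤ c * (x ⬝ᵥ x)) :
    ‖Uᵀ * V‖ ^ 2 ≤ c :=
  l2_opNorm_sq_le hc fun x => transpose_mul_mulVec_dotProduct_self U V x ▸ h x

lemma isUnit_det_and_l2_opNorm_transpose_mul_inv_sq_le {U V : Matrix (Fin d) (Fin r) ℝ} {c : ℝ}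
    (hc : 0 < c) (h : ∀ x, c * (x ⬝ᵥ x) ≤ (V *ᵥ x) ⬝ᵥ ((U * Uᵀ) *ᵥ (V *ᵥ x))) :
    IsUnit (Uᵀ * V).det ∧ ‖(Uᵀ * V)⁻¹‖ ^ 2 ≤ c⁻¹ :=
  isUnit_det_and_l2_opNorm_inv_sq_le hc fun x => transpose_mul_mulVec_dotProduct_self U V x ▸ h x

lemma dotProduct_mulVec_self_of_orthonormal {V : Matrix (Fin d) (Fin k) ℝ} (hV : Vᵀ * V = 1)
    (x : Fin k → ℝ) : (V *ᵥ x) ⬝ᵥ (V *ᵥ x) = x ⬝ᵥ x := by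
  rw [← Matrix.transpose_transpose V, ← dotProduct_mul_transpose_mulVec,
    Matrix.transpose_transpose, hV, Matrix.one_mulVec]

lemma l2_opNorm_le_one_of_orthonormal {V : Matrix (Fin d) (Fin k) ℝ} (hV : Vᵀ * V = 1) :
    ‖V‖ ≤ 1 := by
  rw [← sq_le_one_iff₀ (norm_nonneg V)]
  exact l2_opNorm_sq_le zero_le_one fun x => by
    rw [dotProduct_mulVec_self_of_orthonormal hV, one_mul]

lemma mul_transpose_add_mul_transpose_eq_one (hrd : r ≤ d) {Vs : Matrix (Fin d) (Fin r) ℝ}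
    {Vp : Matrix (Fin d) (Fin (d - r)) ℝ} (hVs : Vsᵀ * Vs = 1) (hVp : Vpᵀ * Vp = 1)
    (hVsVp : Vsᵀ * Vp = 0) : Vs * Vsᵀ + Vp * Vpᵀ = 1 := by
  have e : Fin d ≃ Fin r ⊕ Fin (d - r) :=
    (finCongr (Nat.add_sub_cancel' hrd)).symm.trans finSumFinEquiv.symm
  have hVpVs : Vpᵀ * Vs = 0 := by
    rw [← Matrix.transpose_transpose (Vpᵀ * Vs), Matrix.transpose_mul, Matrix.transpose_transpose,
      hVsVp, Matrix.transpose_zero]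
  have hrows : Matrix.fromRows Vsᵀ Vpᵀ * Matrix.fromCols Vs Vp = 1 := by
    rw [Matrix.fromRows_mul_fromCols, hVs, hVp, hVsVp, hVpVs, Matrix.fromBlocks_one]
  rw [← Matrix.fromCols_mul_fromRows]
  exact (Matrix.fromCols_mul_fromRows_eq_one_comm e Vs Vp Vsᵀ Vpᵀ).mpr hrows

lemma frobNorm_eq_norm_toLp (A : Matrix (Fin m) (Fin n) ℝ) :
    frobNorm A = ‖(WithLp.toLp 2 (Function.uncurry A) : EuclideanSpace ℝ (Fin m × Fin n))‖ := by
  simp only [frobNorm, EuclideanSpace.norm_eq, Fintype.sum_prod_type, Real.norm_eq_abs, sq_abs]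
  rfl

lemma frobNorm_nonneg (A : Matrix (Fin m) (Fin n) ℝ) : 0 ≤ frobNorm A :=
  Real.sqrt_nonneg _

lemma frobNorm_eq_zero {A : Matrix (Fin m) (Fin n) ℝ} : frobNorm A = 0 ↔ A = 0 := by
  rw [frobNorm_eq_norm_toLp, norm_eq_zero]
  constructor
  · intro h; ext i j; exact congrFun (congrArg WithLp.ofLp h) (i, j)
  · rintro rfl; rfl

@[simp]
lemma frobNorm_zero : frobNorm (0 : Matrix (Fin m) (Fin n) ℝ) = 0 :=
  frobNorm_eq_zero.mpr rfl

lemma frobNorm_add_le (A B : Matrix (Fin m) (Fin n) ℝ) :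
    frobNorm (A + B) ≤ frobNorm A + frobNorm B := by
  have h : (WithLp.toLp 2 (Function.uncurry (A + B)) : EuclideanSpace ℝ (Fin m × Fin n)) =
      WithLp.toLp 2 (Function.uncurry A) + WithLp.toLp 2 (Function.uncurry B) := by
    ext ⟨i, j⟩; rfl
  simp only [frobNorm_eq_norm_toLp, h]
  exact norm_add_le _ _

lemma frobNorm_sub_le (A B : Matrix (Fin m) (Fin n) ℝ) :
    frobNorm (A - B) ≤ frobNorm A + frobNorm B := by
  have h : (WithLp.toLp 2 (Function.uncurry (A - B)) : EuclideanSpace ℝ (Fin m × Fin n)) =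
      WithLp.toLp 2 (Function.uncurry A) - WithLp.toLp 2 (Function.uncurry B) := by
    ext ⟨i, j⟩; rfl
  simp only [frobNorm_eq_norm_toLp, h]
  exact norm_sub_le _ _

lemma frobNorm_sq (A : Matrix (Fin m) (Fin n) ℝ) : frobNorm A ^ 2 = ∑ i, ∑ j, A i j ^ 2 :=
  Real.sq_sqrt (Finset.sum_nonneg fun _ _ => Finset.sum_nonneg fun _ _ => sq_nonneg _)

lemma frobNorm_transpose (A : Matrix (Fin m) (Fin n) ℝ) : frobNorm Aᵀ = frobNorm A := by
  rw [frobNorm, frobNorm, Finset.sum_comm]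
  rfl

lemma frobNorm_sq_eq_sum_col (A : Matrix (Fin m) (Fin n) ℝ) :
    frobNorm A ^ 2 = ∑ j, Aᵀ j ⬝ᵥ Aᵀ j := by
  rw [← frobNorm_transpose, frobNorm_sq]
  simp [dotProduct, sq]

lemma transpose_mul_apply_eq_mulVec (M : Matrix (Fin m) (Fin n) ℝ) (A : Matrix (Fin n) (Fin p) ℝ)
    (j : Fin p) : (M * A)ᵀ j = M *ᵥ Aᵀ j := by
  ext i; simp [Matrix.mul_apply, Matrix.mulVec, dotProduct]

lemma frobNorm_mul_le (M : Matrix (Fin m) (Fin n) ℝ) (A : Matrix (Fin n) (Fin p) ℝ) :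
    frobNorm (M * A) ≤ ‖M‖ * frobNorm A := by
  rw [← sq_le_sq₀ (frobNorm_nonneg _) (mul_nonneg (norm_nonneg _) (frobNorm_nonneg _)), mul_pow,
    frobNorm_sq_eq_sum_col, frobNorm_sq_eq_sum_col, Finset.mul_sum]
  refine Finset.sum_le_sum fun j _ => ?_
  rw [transpose_mul_apply_eq_mulVec]
  exact mulVec_dotProduct_self_le M _

lemma frobNorm_mul_le' (A : Matrix (Fin m) (Fin n) ℝ) (M : Matrix (Fin n) (Fin p) ℝ) :
    frobNorm (A * M) ≤ frobNorm A * ‖M‖ := by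
  rw [← frobNorm_transpose, Matrix.transpose_mul, ← frobNorm_transpose A, mul_comm,
    ← Matrix.conjTranspose_eq_transpose_of_trivial M, ← Matrix.l2_opNorm_conjTranspose M]
  exact frobNorm_mul_le _ _

lemma frobNorm_mul_le_of_orthonormal (A : Matrix (Fin m) (Fin n) ℝ) {V : Matrix (Fin n) (Fin k) ℝ}
    (hV : Vᵀ * V = 1) : frobNorm (A * V) ≤ frobNorm A :=
  (frobNorm_mul_le' A V).trans
    (mul_le_of_le_one_right (frobNorm_nonneg A) (l2_opNorm_le_one_of_orthonormal hV))

lemma l2_opNorm_le_frobNorm (M : Matrix (Fin m) (Fin n) ℝ) : ‖M‖ ≤ frobNorm M := by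
  rw [← sq_le_sq₀ (norm_nonneg _) (frobNorm_nonneg _)]
  refine l2_opNorm_sq_le (sq_nonneg _) fun x => ?_
  rw [frobNorm_sq, dotProduct, Finset.sum_mul]
  refine Finset.sum_le_sum fun i _ => ?_
  simpa [Matrix.mulVec, dotProduct, sq] using Finset.sum_mul_sq_le_sq_mul_sq Finset.univ (M i) x

lemma frobNorm_sq_eq_add {V₁ : Matrix (Fin m) (Fin k) ℝ} {V₂ : Matrix (Fin m) (Fin p) ℝ}
    (hV : V₁ * V₁ᵀ + V₂ * V₂ᵀ = 1) (A : Matrix (Fin m) (Fin n) ℝ) :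
    frobNorm A ^ 2 = frobNorm (V₁ᵀ * A) ^ 2 + frobNorm (V₂ᵀ * A) ^ 2 := by
  simp only [frobNorm_sq_eq_sum_col, transpose_mul_apply_eq_mulVec, ← Finset.sum_add_distrib,
    ← dotProduct_mul_transpose_mulVec, ← dotProduct_add, ← Matrix.add_mulVec, hV,
    Matrix.one_mulVec]

lemma frobNorm_gram_sub_le {P T : Matrix (Fin k) (Fin k) ℝ} (hP : IsUnit P.det)
    (hT : IsUnit T.det) (Q R : Matrix (Fin k) (Fin n) ℝ) :
    frobNorm (Qᵀ * Q - Rᵀ * R) ≤ ‖P⁻¹ * Q‖ * frobNorm (Pᵀ * Q - Tᵀ * R) +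
      ‖R‖ * ‖T⁻¹‖ * (frobNorm (Pᵀ * Q - Tᵀ * R) + ‖P⁻¹ * Q‖ * frobNorm (Pᵀ * P - Tᵀ * T)) := by
  set K := P⁻¹ * Q
  set E := Kᵀ * Tᵀ - Rᵀ
  have hKP : Kᵀ * Pᵀ = Qᵀ := by
    rw [← Matrix.transpose_mul, ← Matrix.mul_assoc, Matrix.mul_nonsing_inv _ hP, Matrix.one_mul]
  have hN : Qᵀ * Q - Rᵀ * R = Kᵀ * (Pᵀ * Q - Tᵀ * R) + E * R := by
    simp only [E, Matrix.mul_sub, Matrix.sub_mul, ← Matrix.mul_assoc, hKP]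
    abel
  have hE : E = ((Pᵀ * Q - Tᵀ * R)ᵀ - Kᵀ * (Pᵀ * P - Tᵀ * T)) * T⁻¹ := by
    have hET : E * T = (Pᵀ * Q - Tᵀ * R)ᵀ - Kᵀ * (Pᵀ * P - Tᵀ * T) := by
      simp only [E, Matrix.mul_sub, Matrix.sub_mul, ← Matrix.mul_assoc, hKP,
        Matrix.transpose_sub, Matrix.transpose_mul, Matrix.transpose_transpose]
      abel
    rw [← hET, Matrix.mul_assoc, Matrix.mul_nonsing_inv _ hT, Matrix.mul_one]
  have hKt : ‖Kᵀ‖ = ‖K‖ := by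
    rw [← Matrix.conjTranspose_eq_transpose_of_trivial, Matrix.l2_opNorm_conjTranspose]
  have hEf : frobNorm E ≤
      ‖T⁻¹‖ * (frobNorm (Pᵀ * Q - Tᵀ * R) + ‖K‖ * frobNorm (Pᵀ * P - Tᵀ * T)) := by
    rw [hE, mul_comm]
    refine (frobNorm_mul_le' _ _).trans (mul_le_mul_of_nonneg_right ?_ (norm_nonneg _))
    refine (frobNorm_sub_le _ _).trans (add_le_add (frobNorm_transpose _).le ?_)
    exact hKt ▸ frobNorm_mul_le _ _
  calc frobNorm (Qᵀ * Q - Rᵀ * R)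
      ≤ ‖K‖ * frobNorm (Pᵀ * Q - Tᵀ * R) + frobNorm E * ‖R‖ := by
        rw [hN, ← hKt]
        exact (frobNorm_add_le _ _).trans
          (add_le_add (frobNorm_mul_le _ _) (frobNorm_mul_le' _ _))
    _ ≤ _ := by
        have := mul_le_mul_of_nonneg_right hEf (norm_nonneg R)
        linarith

-- `1599/1600 = 1 - 1/1600`, `97/100 ≤ 1599/1600 - 7/250` and `3/100 ≥ 1/1600 + 7/250`, where
-- `7/250` bounds the constant `√(3(√2 - 1))/40` of the theorem.
lemma frobNorm_gram_sub_le_three_fifths {σ c : ℝ} (hσ : 0 < σ) {P T : Matrix (Fin k) (Fin k) ℝ}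
    {Q R : Matrix (Fin k) (Fin n) ℝ}
    (hP : IsUnit P.det ∧ ‖P⁻¹‖ ^ 2 ≤ (1599 / 1600 * σ)⁻¹) (hQ : ‖Q‖ ^ 2 ≤ σ / 1600)
    (hT : IsUnit T.det ∧ ‖T⁻¹‖ ^ 2 ≤ (97 / 100 * σ)⁻¹) (hR : ‖R‖ ^ 2 ≤ 3 / 100 * σ)
    (hPQ : frobNorm (Pᵀ * Q - Tᵀ * R) ≤ c) (hPP : frobNorm (Pᵀ * P - Tᵀ * T) ≤ c) :
    frobNorm (Qᵀ * Q - Rᵀ * R) ≤ 3 / 5 * c := by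
  have hK : ‖P⁻¹ * Q‖ ≤ 1 / 39 := by
    rw [← sq_le_sq₀ (norm_nonneg _) (by norm_num)]
    calc ‖P⁻¹ * Q‖ ^ 2 ≤ ‖P⁻¹‖ ^ 2 * ‖Q‖ ^ 2 := by
          rw [← mul_pow]; exact pow_le_pow_left₀ (norm_nonneg _) (Matrix.l2_opNorm_mul _ _) 2
      _ ≤ (1599 / 1600 * σ)⁻¹ * (σ / 1600) := by gcongr; exact hP.2
      _ ≤ (1 / 39) ^ 2 := by field_simp; norm_num
  have hRT : ‖R‖ * ‖T⁻¹‖ ≤ 9 / 50 := by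
    rw [← sq_le_sq₀ (by positivity) (by norm_num)]
    calc (‖R‖ * ‖T⁻¹‖) ^ 2 = ‖R‖ ^ 2 * ‖T⁻¹‖ ^ 2 := mul_pow _ _ _
      _ ≤ (3 / 100 * σ) * (97 / 100 * σ)⁻¹ := by gcongr; exact hT.2
      _ ≤ (9 / 50) ^ 2 := by field_simp; norm_num
  have hc : 0 ≤ c := (frobNorm_nonneg _).trans hPQ
  calc frobNorm (Qᵀ * Q - Rᵀ * R)
      ≤ ‖P⁻¹ * Q‖ * frobNorm (Pᵀ * Q - Tᵀ * R) +
        ‖R‖ * ‖T⁻¹‖ * (frobNorm (Pᵀ * Q - Tᵀ * R) + ‖P⁻¹ * Q‖ * frobNorm (Pᵀ * P - Tᵀ * T)) :=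
        frobNorm_gram_sub_le hP.1 hT.1 Q R
    _ ≤ 1 / 39 * c + 9 / 50 * (c + 1 / 39 * c) := by
        have := frobNorm_nonneg (Pᵀ * Q - Tᵀ * R)
        have := frobNorm_nonneg (Pᵀ * P - Tᵀ * T)
        gcongr
    _ ≤ 3 / 5 * c := by linarith

lemma transpose_mul_gram_sub_mul (U W : Matrix (Fin d) (Fin r) ℝ) (A : Matrix (Fin d) (Fin k) ℝ)
    (B : Matrix (Fin d) (Fin p) ℝ) :
    (Uᵀ * A)ᵀ * (Uᵀ * B) - (Wᵀ * A)ᵀ * (Wᵀ * B) = Aᵀ * (U * Uᵀ - W * Wᵀ) * B := by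
  simp only [Matrix.transpose_mul, Matrix.transpose_transpose, Matrix.mul_sub, Matrix.sub_mul,
    Matrix.mul_assoc]

lemma frobNorm_compl_mul_mul_compl_le {X : Matrix (Fin d) (Fin d) ℝ}
    {Vs U W : Matrix (Fin d) (Fin r) ℝ} {Vp : Matrix (Fin d) (Fin k) ℝ} {σ : ℝ} (hσ : 0 < σ)
    (hVs : Vsᵀ * Vs = 1) (hVp : Vpᵀ * Vp = 1)
    (hXVs : ∀ x, σ * (x ⬝ᵥ x) ≤ (Vs *ᵥ x) ⬝ᵥ (X *ᵥ (Vs *ᵥ x))) (hXVp : X * Vp = 0)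
    (hU : specNorm (U * Uᵀ - X) ≤ σ / 1600) (hW : frobNorm (U * Uᵀ - W * Wᵀ) ≤ 7 / 250 * σ) :
    frobNorm (Vpᵀ * (U * Uᵀ - W * Wᵀ) * Vp) ≤ 3 / 5 * frobNorm (Vsᵀ * (U * Uᵀ - W * Wᵀ)) := by
  have hUX y := abs_le.mp ((abs_dotProduct_mulVec_sub_le (U * Uᵀ) X y).trans
    (mul_le_mul_of_nonneg_right hU (dotProduct_self_star_nonneg y)))
  have hUW y := abs_le.mp ((abs_dotProduct_mulVec_sub_le (U * Uᵀ) (W * Wᵀ) y).trans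
    (mul_le_mul_of_nonneg_right ((l2_opNorm_le_frobNorm _).trans hW)
      (dotProduct_self_star_nonneg y)))
  have hXVp' x : X *ᵥ (Vp *ᵥ x) = 0 := by rw [Matrix.mulVec_mulVec, hXVp, Matrix.zero_mulVec]
  have hσx {n : ℕ} (x : Fin n → ℝ) : 0 ≤ σ * (x ⬝ᵥ x) :=
    mul_nonneg hσ.le (dotProduct_self_star_nonneg x)
  have hQ : ‖Uᵀ * Vp‖ ^ 2 ≤ σ / 1600 := l2_opNorm_transpose_mul_sq_le (by positivity) fun x => by
    have := (hUX (Vp *ᵥ x)).2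
    rw [hXVp', dotProduct_zero, dotProduct_mulVec_self_of_orthonormal hVp] at this
    linarith
  have hR : ‖Wᵀ * Vp‖ ^ 2 ≤ 3 / 100 * σ :=
    l2_opNorm_transpose_mul_sq_le (by positivity) fun x => by
      have := (hUX (Vp *ᵥ x)).2
      have := (hUW (Vp *ᵥ x)).1
      rw [hXVp', dotProduct_zero, dotProduct_mulVec_self_of_orthonormal hVp] at *
      linarith [hσx x]
  have hP := isUnit_det_and_l2_opNorm_transpose_mul_inv_sq_le (U := U) (V := Vs)
    (by positivity : 0 < 1599 / 1600 * σ) fun x => by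
      have := (hUX (Vs *ᵥ x)).1
      rw [dotProduct_mulVec_self_of_orthonormal hVs] at this
      linarith [hXVs x]
  have hT := isUnit_det_and_l2_opNorm_transpose_mul_inv_sq_le (U := W) (V := Vs)
    (by positivity : 0 < 97 / 100 * σ) fun x => by
      have := (hUX (Vs *ᵥ x)).1
      have := (hUW (Vs *ᵥ x)).2
      rw [dotProduct_mulVec_self_of_orthonormal hVs] at *
      linarith [hXVs x, hσx x]
  rw [← transpose_mul_gram_sub_mul]
  refine frobNorm_gram_sub_le_three_fifths hσ hP hQ hT hR ?_ ?_
  · rw [transpose_mul_gram_sub_mul]; exact frobNorm_mul_le_of_orthonormal _ hVp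
  · rw [transpose_mul_gram_sub_mul]; exact frobNorm_mul_le_of_orthonormal _ hVs

lemma frobNorm_le_three_mul_of_compl_le {Vs : Matrix (Fin d) (Fin r) ℝ}
    {Vp : Matrix (Fin d) (Fin k) ℝ} (hV : Vs * Vsᵀ + Vp * Vpᵀ = 1) (hVp : Vpᵀ * Vp = 1)
    {A : Matrix (Fin d) (Fin d) ℝ} (hA : Aᵀ = A)
    (h : frobNorm (Vpᵀ * A * Vp) ≤ 3 / 5 * frobNorm (Vsᵀ * A)) :
    frobNorm A ≤ 3 * frobNorm (Vsᵀ * A) := by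
  have hAVp : frobNorm (Vpᵀ * A) ^ 2 =
      frobNorm (Vsᵀ * A * Vp) ^ 2 + frobNorm (Vpᵀ * A * Vp) ^ 2 := by
    rw [← frobNorm_transpose, frobNorm_sq_eq_add hV, Matrix.transpose_mul,
      Matrix.transpose_transpose, hA, Matrix.mul_assoc, Matrix.mul_assoc]
  have hcross := frobNorm_mul_le_of_orthonormal (Vsᵀ * A) hVp
  have := frobNorm_nonneg (Vsᵀ * A * Vp)
  have := frobNorm_nonneg (Vpᵀ * A * Vp)
  rw [← sq_le_sq₀ (frobNorm_nonneg _) (mul_nonneg zero_le_three (frobNorm_nonneg _)),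
    frobNorm_sq_eq_add hV A, hAVp]
  nlinarith

end OperatorNorm

lemma mul_eq_zero_of_orthogonal {d r k : ℕ} {X : Matrix (Fin d) (Fin d) ℝ} (hX : X.IsHermitian)
    {Vs : Matrix (Fin d) (Fin r) ℝ} {Vp : Matrix (Fin d) (Fin k) ℝ} (hVsX : Vs * Vsᵀ * X = X)
    (hVsVp : Vsᵀ * Vp = 0) : X * Vp = 0 := by
  rw [← (isHermitian_iff_isSymm.mp hX).eq, ← hVsX, Matrix.transpose_mul, Matrix.transpose_mul,
    Matrix.transpose_transpose, Matrix.mul_assoc, Matrix.mul_assoc, hVsVp, Matrix.mul_zero,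
    Matrix.mul_zero]

lemma sigmaMin_mul_le_dotProduct_mulVec {d r : ℕ} {X : Matrix (Fin d) (Fin d) ℝ}
    (hX : X.PosSemidef) (hXrank : X.rank = r) {V : Matrix (Fin d) (Fin r) ℝ} (hV : Vᵀ * V = 1)
    (hVX : V * Vᵀ * X = X) (x : Fin r → ℝ) :
    sigmaMin X * (x ⬝ᵥ x) ≤ (V *ᵥ x) ⬝ᵥ (X *ᵥ (V *ᵥ x)) := by
  obtain ⟨z, hz⟩ := exists_mulVec_eq_of_rank hXrank hVX x
  have h := sigmaMin_mul_dotProduct_le hX z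
  rwa [hz, dotProduct_mulVec_self_of_orthonormal hV] at h

lemma sqrt_three_mul_sqrt_two_sub_one_div_forty_le :
    Real.sqrt (3 * (Real.sqrt 2 - 1)) / 40 ≤ 7 / 250 := by
  have h2 : Real.sqrt 2 ≤ 1.415 := Real.sqrt_le_iff.mpr ⟨by norm_num, by norm_num⟩
  have h3 : Real.sqrt (3 * (Real.sqrt 2 - 1)) ≤ 1.12 :=
    Real.sqrt_le_iff.mpr ⟨by norm_num, by nlinarith⟩
  linarith

theorem statement7 {d r : ℕ} (hrd : r ≤ d)
    (Xs : Matrix (Fin d) (Fin d) ℝ) (hXpsd : Xs.PosSemidef) (hXrank : Xs.rank = r)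
    (Vs : Matrix (Fin d) (Fin r) ℝ) (Vp : Matrix (Fin d) (Fin (d - r)) ℝ)
    (hVs : Vsᵀ * Vs = 1) (hVsX : Vs * Vsᵀ * Xs = Xs)
    (hVp : Vpᵀ * Vp = 1) (hVsVp : Vsᵀ * Vp = 0)
    (U W : Matrix (Fin d) (Fin r) ℝ)
    (h1 : specNorm (U * Uᵀ - Xs) ≤ sigmaMin Xs / 1600)
    (h2 : frobNorm (U * Uᵀ - W * Wᵀ)
      ≤ Real.sqrt (3 * (Real.sqrt 2 - 1)) / 40 * sigmaMin Xs) :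
    frobNorm (Vpᵀ * (U * Uᵀ - W * Wᵀ) * Vp)
        ≤ 3 / 5 * frobNorm (Vsᵀ * (U * Uᵀ - W * Wᵀ)) ∧
      frobNorm (U * Uᵀ - W * Wᵀ) ≤ 3 * frobNorm (Vsᵀ * (U * Uᵀ - W * Wᵀ)) := by
  have hV := mul_transpose_add_mul_transpose_eq_one hrd hVs hVp hVsVp
  have hsymm : (U * Uᵀ - W * Wᵀ)ᵀ = U * Uᵀ - W * Wᵀ := by
    simp only [Matrix.transpose_sub, Matrix.transpose_mul, Matrix.transpose_transpose]
  suffices h : frobNorm (Vpᵀ * (U * Uᵀ - W * Wᵀ) * Vp) ≤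
      3 / 5 * frobNorm (Vsᵀ * (U * Uᵀ - W * Wᵀ)) from
    ⟨h, frobNorm_le_three_mul_of_compl_le hV hVp hsymm h⟩
  -- `sigmaMin` is an `sInf`, which is `0` when `Xs` has no positive eigenvalue; `h2` then
  -- forces `U Uᵀ = W Wᵀ`.
  rcases (sigmaMin_nonneg Xs).eq_or_lt with hσ | hσ
  · have h0 : U * Uᵀ - W * Wᵀ = 0 :=
      frobNorm_eq_zero.mp (le_antisymm (by simpa [← hσ] using h2) (frobNorm_nonneg _))
    simp [h0]
  exact frobNorm_compl_mul_mul_compl_le hσ hVs hVp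
    (sigmaMin_mul_le_dotProduct_mulVec hXpsd hXrank hVs hVsX)
    (mul_eq_zero_of_orthogonal hXpsd.isHermitian hVsX hVsVp) h1
    (h2.trans (mul_le_mul_of_nonneg_right sqrt_three_mul_sqrt_two_sub_one_div_forty_le hσ.le))
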